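/- arXiv:2009.06562 — 2 statements merged into one kernel-verified Lean document; each statement's English description precedes it below -/
import Mathlib

section
/- (Lemma 5.4) Under the ProxSARAH-AS process within one epoch j — with f = (1/n)∑ f_i L̃-smooth (L̃ = (1/n)∑ L_i > 0), F = f + r, full-gradient initialization V_0^{(j)} = ∇f(x_0^{(j)}), x_1^{(j)} = x_0^{(j)}, recursive estimator V_t^{(j)} = ∑_{i∈S_t^{(j)}} (1/(n p_i))(∇f_i(x_t^{(j)}) − ∇f_i(x_{t−1}^{(j)})) + V_{t−1}^{(j)} with independent sampling subsets satisfying P − ppᵀ ⪯ Diag(p∘v), proximal updates x_{t+1}^{(j)} = argmin_y { r(y) + ⟨V_t^{(j)}, y − x_t^{(j)}⟩ + (1/(2η))‖y − x_t^{(j)}‖² }, and Q = ∑_{i=1}^n v_i L_i²/(p_i n²) — if (1/2)(1/η − 2L̃) − mQ/(2L̃) > 0, then ∑_{t=1}^m E[‖x_{t+1}^{(j)} − x_t^{(j)}‖²] ≤ E[F(x_0^{(j)}) − F(x_{m+1}^{(j)})] / ((1/2)(1/η − 2L̃) − mQ/(2L̃)). -/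
/-!
Smoothness of `f`, optimality of `x_{t+1}` for the proximal model tested at `y = x_t`, and
Young's inequality give the one-step descent
`F(x_{t+1}) ≤ F(x_t) + ‖∇f(x_t) - V_t‖² / (2L̃) - (1/(2η) - L̃) ‖x_{t+1} - x_t‖²`.
The estimator error `σ_t = ∇f(x_t) - V_t` equals `σ_{t-1}` minus the sampling error of `S_t`,
which given the past has mean zero and, by `P - ppᵀ ⪯ Diag(p ∘ v)` applied coordinatewise,
second moment at most `Q ‖x_t - x_{t-1}‖²`. Hence `E‖σ_t‖² ≤ E‖σ_{t-1}‖² + Q E‖x_t - x_{t-1}‖²`,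
and as `σ_0 = 0` and `x_1 = x_0`, every `E‖σ_t‖²` is at most `Q` times the sum to be bounded.
Summing the descent inequality over `t = 1, …, m` and telescoping finishes the proof.
-/

open MeasureTheory Filter Finset
open scoped InnerProductSpace

section Smooth

variable {E : Type*} [NormedAddCommGroup E] [InnerProductSpace ℝ E]

theorem apply_le_of_lipschitz_gradient [CompleteSpace E] {g : E → ℝ} {C : ℝ}
    (hg : Differentiable ℝ g) (hC : ∀ a b, ‖gradient g a - gradient g b‖ ≤ C * ‖a - b‖)
    (x y : E) : g y ≤ g x + ⟪gradient g x, y - x⟫_ℝ + C / 2 * ‖y - x‖ ^ 2 := by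
  set v := y - x
  let φ : ℝ → ℝ := fun s => g (x + s • v) - s * ⟪gradient g x, v⟫_ℝ - C / 2 * s ^ 2 * ‖v‖ ^ 2
  have hφ : ∀ s, HasDerivAt φ
      (⟪gradient g (x + s • v), v⟫_ℝ - ⟪gradient g x, v⟫_ℝ - C * s * ‖v‖ ^ 2) s := by
    intro s
    have hline : HasDerivAt (fun s : ℝ => x + s • v) v s := by
      simpa using ((hasDerivAt_id s).smul_const v).const_add x
    have hgs := ((hg _).hasGradientAt.hasFDerivAt).comp_hasDerivAt s hline
    refine ((hgs.sub ((hasDerivAt_id s).mul_const ⟪gradient g x, v⟫_ℝ)).sub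
      (((hasDerivAt_pow 2 s).const_mul (C / 2)).mul_const (‖v‖ ^ 2))).congr_deriv ?_
    rw [InnerProductSpace.toDual_apply_apply]
    ring
  have hanti : AntitoneOn φ (Set.Ici 0) :=
    antitoneOn_of_hasDerivWithinAt_nonpos (convex_Ici 0)
      (fun s _ => (hφ s).continuousAt.continuousWithinAt)
      (fun s _ => (hφ s).hasDerivWithinAt) fun s hs => by
        rw [interior_Ici, Set.mem_Ioi] at hs
        have := calc ⟪gradient g (x + s • v) - gradient g x, v⟫_ℝ
            ≤ ‖gradient g (x + s • v) - gradient g x‖ * ‖v‖ := real_inner_le_norm _ _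
          _ ≤ C * ‖(x + s • v) - x‖ * ‖v‖ := by gcongr; exact hC _ _
          _ = C * s * ‖v‖ ^ 2 := by
            rw [add_sub_cancel_left, norm_smul, Real.norm_of_nonneg hs.le]; ring
        rw [inner_sub_left] at this
        linarith
  have := hanti Set.self_mem_Ici (Set.mem_Ici.mpr zero_le_one) zero_le_one
  simp only [φ, zero_smul, add_zero, one_smul, zero_mul, sub_zero, one_mul, v,
    add_sub_cancel] at this
  linarith

theorem real_inner_le_div_add_mul (a b : E) {c : ℝ} (hc : 0 < c) :
    ⟪a, b⟫_ℝ ≤ 1 / (2 * c) * ‖a‖ ^ 2 + c / 2 * ‖b‖ ^ 2 := by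
  have key : 0 ≤ ‖a - c • b‖ ^ 2 / (2 * c) := by positivity
  rw [norm_sub_sq_real, norm_smul, real_inner_smul_right, Real.norm_of_nonneg hc.le] at key
  have h : (‖a‖ ^ 2 - 2 * (c * ⟪a, b⟫_ℝ) + (c * ‖b‖) ^ 2) / (2 * c)
      = 1 / (2 * c) * ‖a‖ ^ 2 + c / 2 * ‖b‖ ^ 2 - ⟪a, b⟫_ℝ := by
    field_simp
    ring
  linarith

theorem prox_step_le {g r : E → ℝ} {G V x x' : E} {L η : ℝ} (hL : 0 < L)
    (hdesc : g x' ≤ g x + ⟪G, x' - x⟫_ℝ + L / 2 * ‖x' - x‖ ^ 2)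
    (hprox : ∀ y, r x' + ⟪V, x' - x⟫_ℝ + 1 / (2 * η) * ‖x' - x‖ ^ 2
      ≤ r y + ⟪V, y - x⟫_ℝ + 1 / (2 * η) * ‖y - x‖ ^ 2) :
    g x' + r x' ≤ g x + r x + 1 / (2 * L) * ‖G - V‖ ^ 2 - (1 / (2 * η) - L) * ‖x' - x‖ ^ 2 := by
  have hx := hprox x
  rw [sub_self, inner_zero_right, norm_zero] at hx
  have hyoung := real_inner_le_div_add_mul (G - V) (x' - x) hL
  rw [inner_sub_left] at hyoung
  linarith

theorem hasGradientAt_const_mul_sum [CompleteSpace E] {ι : Type*} [Fintype ι] {f : ι → E → ℝ}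
    {x : E} (hf : ∀ i, DifferentiableAt ℝ (f i) x) (c : ℝ) :
    HasGradientAt (fun y => c * ∑ i, f i y) (c • ∑ i, gradient (f i) x) x := by
  rw [hasGradientAt_iff_hasFDerivAt, map_smul, map_sum]
  exact (HasFDerivAt.fun_sum fun i _ => (hf i).hasGradientAt.hasFDerivAt).const_mul c

theorem norm_smul_sum_sub_smul_sum_le {ι : Type*} [Fintype ι] {c : ℝ} (hc : 0 ≤ c)
    {G : ι → E → E} {L : ι → ℝ} (hG : ∀ i a b, ‖G i a - G i b‖ ≤ L i * ‖a - b‖) (a b : E) :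
    ‖c • ∑ i, G i a - c • ∑ i, G i b‖ ≤ (c * ∑ i, L i) * ‖a - b‖ := by
  rw [← smul_sub, ← sum_sub_distrib, norm_smul, Real.norm_of_nonneg hc, mul_assoc, sum_mul]
  exact mul_le_mul_of_nonneg_left ((norm_sum_le _ _).trans (sum_le_sum fun i _ => hG i a b)) hc

end Smooth

section Sampling

variable {n : ℕ} {q : Finset (Fin n) → ℝ} {p : Fin n → ℝ} {P : Fin n → Fin n → ℝ}

/-- `q` is the law of a random subset of `Fin n`, and `p i`, `P i j` are the probabilities that
it contains `i`, resp. both `i` and `j`. -/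
structure IsInclusionProbs (q : Finset (Fin n) → ℝ) (p : Fin n → ℝ) (P : Fin n → Fin n → ℝ) :
    Prop where
  sum_eq_one : ∑ A, q A = 1
  single : ∀ i, p i = ∑ A ∈ univ.filter (fun A : Finset (Fin n) => i ∈ A), q A
  pair : ∀ i j, P i j = ∑ A ∈ univ.filter (fun A : Finset (Fin n) => i ∈ A ∧ j ∈ A), q A

theorem sum_smul_sum_mem_eq {M : Type*} [AddCommMonoid M] [Module ℝ M]
    (hpq : ∀ i, p i = ∑ A ∈ univ.filter (fun A : Finset (Fin n) => i ∈ A), q A)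
    (u : Fin n → M) : ∑ A, q A • ∑ i ∈ A, u i = ∑ i, p i • u i := by
  simp_rw [smul_sum, hpq, sum_smul]
  exact sum_comm' (by simp)

theorem sum_mul_sum_mem_sum_mem_eq
    (hPq : ∀ i j, P i j = ∑ A ∈ univ.filter (fun A : Finset (Fin n) => i ∈ A ∧ j ∈ A), q A)
    (c : Fin n → Fin n → ℝ) : ∑ A, q A * ∑ i ∈ A, ∑ j ∈ A, c i j = ∑ i, ∑ j, P i j * c i j := by
  simp_rw [mul_sum, hPq, sum_mul]
  rw [sum_comm' (t' := univ) (s' := fun i => univ.filter (fun A : Finset (Fin n) => i ∈ A))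
    (by simp)]
  exact sum_congr rfl fun i _ => sum_comm' (by simp +contextual)

theorem IsInclusionProbs.sum_mul_sq_sum_mem_sub_eq (hincl : IsInclusionProbs q p P)
    (u : Fin n → ℝ) :
    ∑ A, q A * (∑ i ∈ A, u i - ∑ i, p i * u i) ^ 2
      = ∑ i, ∑ j, (P i j - p i * p j) * u i * u j := by
  have hsq : ∑ A, q A * (∑ i ∈ A, u i) ^ 2 = ∑ i, ∑ j, P i j * (u i * u j) := by
    simp_rw [sq, sum_mul_sum]
    exact sum_mul_sum_mem_sum_mem_eq hincl.pair _
  have hmean : ∑ A, q A * ∑ i ∈ A, u i = ∑ i, p i * u i := sum_smul_sum_mem_eq hincl.single u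
  set m := ∑ i, p i * u i
  calc ∑ A, q A * (∑ i ∈ A, u i - m) ^ 2
      = ∑ A, (q A * (∑ i ∈ A, u i) ^ 2 - 2 * m * (q A * ∑ i ∈ A, u i) + m ^ 2 * q A) :=
        sum_congr rfl fun A _ => by ring
    _ = ∑ A, q A * (∑ i ∈ A, u i) ^ 2 - 2 * m * ∑ A, q A * ∑ i ∈ A, u i
          + m ^ 2 * ∑ A, q A := by
        rw [sum_add_distrib, sum_sub_distrib, ← mul_sum, ← mul_sum]
    _ = ∑ i, ∑ j, P i j * (u i * u j) - m * m := by rw [hsq, hmean, hincl.sum_eq_one]; ring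
    _ = ∑ i, ∑ j, (P i j - p i * p j) * u i * u j := by
        simp_rw [m, sum_mul_sum, ← sum_sub_distrib]
        exact sum_congr rfl fun i _ => sum_congr rfl fun j _ => by ring

variable {v : Fin n → ℝ}

theorem IsInclusionProbs.nonneg_of_covariance_le_diag (hincl : IsInclusionProbs q p P)
    (hq0 : ∀ A, 0 ≤ q A) (hppos : ∀ i, 0 < p i)
    (hsamp : ∀ u : Fin n → ℝ,
      ∑ i, ∑ j, (P i j - p i * p j) * u i * u j ≤ ∑ i, p i * v i * u i ^ 2)
    (i : Fin n) : 0 ≤ v i := by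
  have h := hsamp (Pi.single i 1)
  rw [← hincl.sum_mul_sq_sum_mem_sub_eq] at h
  have hvar : 0 ≤ ∑ A, q A * (∑ j ∈ A, (Pi.single i 1 : Fin n → ℝ) j
      - ∑ j, p j * (Pi.single i 1 : Fin n → ℝ) j) ^ 2 :=
    sum_nonneg fun A _ => mul_nonneg (hq0 A) (sq_nonneg _)
  have hsingle : ∑ j, p j * v j * (Pi.single i 1 : Fin n → ℝ) j ^ 2 = p i * v i := by
    rw [sum_eq_single i (fun j _ hj => by simp [hj]) (by simp)]
    simp
  exact nonneg_of_mul_nonneg_right (by linarith) (hppos i)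

variable {E : Type*} [NormedAddCommGroup E] [InnerProductSpace ℝ E]

theorem IsInclusionProbs.sum_mul_norm_sq_sum_mem_sub_le [FiniteDimensional ℝ E]
    (hincl : IsInclusionProbs q p P)
    (hsamp : ∀ u : Fin n → ℝ,
      ∑ i, ∑ j, (P i j - p i * p j) * u i * u j ≤ ∑ i, p i * v i * u i ^ 2)
    (w : Fin n → E) :
    ∑ A, q A * ‖∑ i ∈ A, w i - ∑ i, p i • w i‖ ^ 2 ≤ ∑ i, p i * v i * ‖w i‖ ^ 2 := by
  set b := stdOrthonormalBasis ℝ E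
  have hnorm : ∀ z : E, ‖z‖ ^ 2 = ∑ k, ⟪b k, z⟫_ℝ ^ 2 := fun z => by
    simp_rw [← b.sum_sq_norm_inner_right z, Real.norm_eq_abs, sq_abs]
  calc ∑ A, q A * ‖∑ i ∈ A, w i - ∑ i, p i • w i‖ ^ 2
      = ∑ k, ∑ A, q A * (∑ i ∈ A, ⟪b k, w i⟫_ℝ - ∑ i, p i * ⟪b k, w i⟫_ℝ) ^ 2 := by
        simp_rw [hnorm, mul_sum, inner_sub_right, inner_sum, real_inner_smul_right]
        exact sum_comm
    _ ≤ ∑ k, ∑ i, p i * v i * ⟪b k, w i⟫_ℝ ^ 2 := sum_le_sum fun k _ => by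
        rw [hincl.sum_mul_sq_sum_mem_sub_eq]
        exact hsamp _
    _ = ∑ i, p i * v i * ‖w i‖ ^ 2 := by
        simp_rw [hnorm, mul_sum]
        exact sum_comm

theorem IsInclusionProbs.sum_mul_norm_sq_sub_sampling_le [FiniteDimensional ℝ E]
    (hincl : IsInclusionProbs q p P)
    (hsamp : ∀ u : Fin n → ℝ,
      ∑ i, ∑ j, (P i j - p i * p j) * u i * u j ≤ ∑ i, p i * v i * u i ^ 2)
    (σ : E) (w : Fin n → E) :
    ∑ A, q A * ‖σ - (∑ i ∈ A, w i - ∑ i, p i • w i)‖ ^ 2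
      ≤ ‖σ‖ ^ 2 + ∑ i, p i * v i * ‖w i‖ ^ 2 := by
  set B : Finset (Fin n) → E := fun A => ∑ i ∈ A, w i - ∑ i, p i • w i
  have hunbiased : ∑ A, q A • B A = 0 := by
    simp_rw [B, smul_sub, sum_sub_distrib, sum_smul_sum_mem_eq hincl.single, ← sum_smul,
      hincl.sum_eq_one, one_smul, sub_self]
  have hcross : ∑ A, q A * ⟪σ, B A⟫_ℝ = 0 := by
    simp_rw [← real_inner_smul_right, ← inner_sum, hunbiased, inner_zero_right]
  calc ∑ A, q A * ‖σ - B A‖ ^ 2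
      = (∑ A, q A) * ‖σ‖ ^ 2 - 2 * ∑ A, q A * ⟪σ, B A⟫_ℝ + ∑ A, q A * ‖B A‖ ^ 2 := by
        simp_rw [norm_sub_sq_real, sum_mul, mul_sum, ← sum_sub_distrib, ← sum_add_distrib]
        exact sum_congr rfl fun A _ => by ring
    _ ≤ ‖σ‖ ^ 2 + ∑ i, p i * v i * ‖w i‖ ^ 2 := by
        rw [hincl.sum_eq_one, hcross]
        linarith [hincl.sum_mul_norm_sq_sum_mem_sub_le hsamp w]

theorem sum_mul_norm_sq_smul_sub_le {L : Fin n → ℝ} (hppos : ∀ i, 0 < p i) (hv : ∀ i, 0 ≤ v i)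
    {G : Fin n → E → E} (hG : ∀ i a b, ‖G i a - G i b‖ ≤ L i * ‖a - b‖) (a b : E) :
    ∑ i, p i * v i * ‖(1 / ((n : ℝ) * p i)) • (G i a - G i b)‖ ^ 2
      ≤ (∑ i, v i * L i ^ 2 / (p i * (n : ℝ) ^ 2)) * ‖a - b‖ ^ 2 := by
  rw [sum_mul]
  refine sum_le_sum fun i _ => ?_
  have hn : (0 : ℝ) < n := Nat.cast_pos.mpr i.pos
  have hpi := hppos i
  have hGi : ‖G i a - G i b‖ ^ 2 ≤ L i ^ 2 * ‖a - b‖ ^ 2 := by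
    rw [← mul_pow]
    exact pow_le_pow_left₀ (norm_nonneg _) (hG i a b) 2
  calc p i * v i * ‖(1 / ((n : ℝ) * p i)) • (G i a - G i b)‖ ^ 2
      = v i / (p i * (n : ℝ) ^ 2) * ‖G i a - G i b‖ ^ 2 := by
        rw [norm_smul, Real.norm_of_nonneg (by positivity)]
        field_simp
    _ ≤ v i / (p i * (n : ℝ) ^ 2) * (L i ^ 2 * ‖a - b‖ ^ 2) :=
        mul_le_mul_of_nonneg_left hGi (div_nonneg (hv i) (by positivity))
    _ = v i * L i ^ 2 / (p i * (n : ℝ) ^ 2) * ‖a - b‖ ^ 2 := by ring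

end Sampling

section Stochastic

variable {Ω : Type*} {m0 : MeasurableSpace Ω} {μ : Measure Ω} {𝓖 : MeasurableSpace Ω}

theorem LipschitzWith.memLp_comp [IsFiniteMeasure μ] {E F : Type*} [NormedAddCommGroup E]
    [NormedAddCommGroup F]
    {K : NNReal} {T : E → F} (hT : LipschitzWith K T) {X : Ω → E} {r : ENNReal}
    (hX : MemLp X r μ) : MemLp (fun ω => T (X ω)) r μ := by
  have h := (hT.sub (LipschitzWith.const (T 0))).comp_memLp (by simp) hX
  convert h.add (memLp_const (T 0)) using 1
  funext ω
  simp

theorem MeasureTheory.Integrable.indicator_one_mul {s : Set Ω} (hs : MeasurableSet[m0] s)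
    {φ : Ω → ℝ} (hφ : Integrable φ μ) :
    Integrable (fun ω => s.indicator (fun _ => (1 : ℝ)) ω * φ ω) μ := by
  have heq : (fun ω => s.indicator (fun _ => (1 : ℝ)) ω * φ ω) = s.indicator φ := by
    funext ω
    by_cases hω : ω ∈ s <;> simp [hω]
  exact heq ▸ hφ.indicator hs

theorem integral_indicator_one_mul_of_condExp_eq_const [IsFiniteMeasure μ] (h𝓖 : 𝓖 ≤ m0)
    {s : Set Ω} (hs : MeasurableSet[m0] s) {c : ℝ}
    (hc : μ[s.indicator (fun _ => (1 : ℝ)) | 𝓖] =ᵐ[μ] fun _ => c)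
    {φ : Ω → ℝ} (hφm : StronglyMeasurable[𝓖] φ) (hφ : Integrable φ μ) :
    ∫ ω, s.indicator (fun _ => (1 : ℝ)) ω * φ ω ∂μ = c * ∫ ω, φ ω ∂μ := by
  have hprod : Integrable (s.indicator (fun _ => (1 : ℝ)) * φ) μ := hφ.indicator_one_mul hs
  calc ∫ ω, s.indicator (fun _ => (1 : ℝ)) ω * φ ω ∂μ
      = ∫ ω, μ[s.indicator (fun _ => (1 : ℝ)) * φ | 𝓖] ω ∂μ := (integral_condExp h𝓖).symm
    _ = ∫ ω, c * φ ω ∂μ := integral_congr_ae <| by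
        filter_upwards [condExp_mul_of_stronglyMeasurable_right hφm hprod
          ((integrable_const 1).indicator hs), hc] with ω h1 h2
        rw [h1, Pi.mul_apply, h2]
    _ = c * ∫ ω, φ ω ∂μ := integral_const_mul c _

theorem integral_comp_eq_sum_of_condExp_indicator_eq_const [IsFiniteMeasure μ] {ι : Type*}
    [Fintype ι] (h𝓖 : 𝓖 ≤ m0) {S : Ω → ι} {q : ι → ℝ}
    (hS : ∀ a, MeasurableSet[m0] {ω | S ω = a})
    (hlaw : ∀ a, μ[{ω | S ω = a}.indicator (fun _ => (1 : ℝ)) | 𝓖] =ᵐ[μ] fun _ => q a)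
    {H : ι → Ω → ℝ} (hHm : ∀ a, StronglyMeasurable[𝓖] (H a)) (hH : ∀ a, Integrable (H a) μ) :
    ∫ ω, H (S ω) ω ∂μ = ∑ a, q a * ∫ ω, H a ω ∂μ := by
  classical
  have hsplit : ∀ ω, H (S ω) ω = ∑ a, {ω | S ω = a}.indicator (fun _ => (1 : ℝ)) ω * H a ω := by
    intro ω
    simp [Set.indicator_apply, eq_comm]
  simp_rw [hsplit]
  rw [integral_finsetSum _ fun a _ => (hH a).indicator_one_mul (hS a)]
  exact sum_congr rfl fun a _ =>
    integral_indicator_one_mul_of_condExp_eq_const h𝓖 (hS a) (hlaw a) (hHm a) (hH a)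

variable {E : Type*} [NormedAddCommGroup E] [InnerProductSpace ℝ E]
  {n : ℕ} {q : Finset (Fin n) → ℝ} {p : Fin n → ℝ} {P : Fin n → Fin n → ℝ} {v : Fin n → ℝ}

theorem IsInclusionProbs.integral_norm_sq_sub_sampling_le [IsFiniteMeasure μ]
    [FiniteDimensional ℝ E] (hincl : IsInclusionProbs q p P)
    (hsamp : ∀ u : Fin n → ℝ,
      ∑ i, ∑ j, (P i j - p i * p j) * u i * u j ≤ ∑ i, p i * v i * u i ^ 2)
    (h𝓖 : 𝓖 ≤ m0) {S : Ω → Finset (Fin n)} (hS : ∀ A, MeasurableSet[m0] {ω | S ω = A})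
    (hlaw : ∀ A, μ[{ω | S ω = A}.indicator (fun _ => (1 : ℝ)) | 𝓖] =ᵐ[μ] fun _ => q A)
    {σ : Ω → E} {w : Fin n → Ω → E} (hσm : StronglyMeasurable[𝓖] σ)
    (hwm : ∀ i, StronglyMeasurable[𝓖] (w i)) (hσ : MemLp σ 2 μ) (hw : ∀ i, MemLp (w i) 2 μ) :
    ∫ ω, ‖σ ω - (∑ i ∈ S ω, w i ω - ∑ i, p i • w i ω)‖ ^ 2 ∂μ
      ≤ ∫ ω, (‖σ ω‖ ^ 2 + ∑ i, p i * v i * ‖w i ω‖ ^ 2) ∂μ := by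
  set H : Finset (Fin n) → Ω → ℝ := fun A ω => ‖σ ω - (∑ i ∈ A, w i ω - ∑ i, p i • w i ω)‖ ^ 2
  have hHm : ∀ A, StronglyMeasurable[𝓖] (H A) := fun A =>
    ((hσm.sub ((Finset.stronglyMeasurable_fun_sum A fun i _ => hwm i).sub
      (Finset.stronglyMeasurable_fun_sum univ fun i _ => (hwm i).const_smul (p i)))).norm).pow 2
  have hH : ∀ A, Integrable (H A) μ := fun A =>
    (hσ.sub ((memLp_finsetSum A fun i _ => hw i).sub
      (memLp_finsetSum univ fun i _ => (hw i).const_smul (p i)))).integrable_norm_pow two_ne_zero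
  calc ∫ ω, H (S ω) ω ∂μ = ∫ ω, ∑ A, q A * H A ω ∂μ := by
        rw [integral_comp_eq_sum_of_condExp_indicator_eq_const h𝓖 hS hlaw hHm hH,
          integral_finsetSum _ fun A _ => (hH A).const_mul (q A)]
        simp_rw [integral_const_mul]
    _ ≤ ∫ ω, (‖σ ω‖ ^ 2 + ∑ i, p i * v i * ‖w i ω‖ ^ 2) ∂μ :=
        integral_mono (integrable_finsetSum _ fun A _ => (hH A).const_mul (q A))
          ((hσ.integrable_norm_pow two_ne_zero).add (integrable_finsetSum _ fun i _ =>
            ((hw i).integrable_norm_pow two_ne_zero).const_mul _))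
          fun ω => hincl.sum_mul_norm_sq_sub_sampling_le hsamp (σ ω) (w · ω)

theorem IsInclusionProbs.integral_norm_sq_sarah_error_le [IsFiniteMeasure μ]
    [FiniteDimensional ℝ E] (hincl : IsInclusionProbs q p P)
    (hsamp : ∀ u : Fin n → ℝ,
      ∑ i, ∑ j, (P i j - p i * p j) * u i * u j ≤ ∑ i, p i * v i * u i ^ 2)
    (hppos : ∀ i, 0 < p i) (hv : ∀ i, 0 ≤ v i)
    (h𝓖 : 𝓖 ≤ m0) {S : Ω → Finset (Fin n)} (hS : ∀ A, MeasurableSet[m0] {ω | S ω = A})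
    (hlaw : ∀ A, μ[{ω | S ω = A}.indicator (fun _ => (1 : ℝ)) | 𝓖] =ᵐ[μ] fun _ => q A)
    {G : Fin n → E → E} {L : Fin n → ℝ} (hG : ∀ i a b, ‖G i a - G i b‖ ≤ L i * ‖a - b‖)
    {g : E → E} (hg : ∀ z, g z = (1 / (n : ℝ)) • ∑ i, G i z)
    {x x' V V' : Ω → E} (hxm : StronglyMeasurable[𝓖] x) (hx'm : StronglyMeasurable[𝓖] x')
    (hVm : StronglyMeasurable[𝓖] V) (hx : MemLp x 2 μ) (hx' : MemLp x' 2 μ) (hV : MemLp V 2 μ)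
    (hrec : ∀ ω, V' ω = ∑ i ∈ S ω, (1 / ((n : ℝ) * p i)) • (G i (x' ω) - G i (x ω)) + V ω) :
    ∫ ω, ‖g (x' ω) - V' ω‖ ^ 2 ∂μ ≤ ∫ ω, ‖g (x ω) - V ω‖ ^ 2 ∂μ
      + (∑ i, v i * L i ^ 2 / (p i * (n : ℝ) ^ 2)) * ∫ ω, ‖x' ω - x ω‖ ^ 2 ∂μ := by
  have hGlip : ∀ i, LipschitzWith (L i).toNNReal (G i) := fun i =>
    LipschitzWith.of_dist_le' fun a b => by simpa only [dist_eq_norm] using hG i a b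
  set w : Fin n → Ω → E := fun i ω => (1 / ((n : ℝ) * p i)) • (G i (x' ω) - G i (x ω))
  have hmean : ∀ ω, ∑ i, p i • w i ω = g (x' ω) - g (x ω) := fun ω => by
    have hpw : ∀ i, p i • w i ω = (1 / (n : ℝ)) • (G i (x' ω) - G i (x ω)) := fun i => by
      rw [smul_smul, mul_one_div, div_mul_cancel_right₀ (hppos i).ne', one_div]
    simp_rw [hpw, hg, ← smul_sub, ← sum_sub_distrib, smul_sum]
  have herr : ∀ ω, g (x' ω) - V' ω
      = (g (x ω) - V ω) - (∑ i ∈ S ω, w i ω - ∑ i, p i • w i ω) := fun ω => by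
    rw [hmean, hrec]
    abel
  have hgx : MemLp (fun ω => g (x ω)) 2 μ := by
    simp_rw [hg]
    exact (memLp_finsetSum univ fun i _ => (hGlip i).memLp_comp hx).const_smul _
  have hgm : StronglyMeasurable[𝓖] (fun ω => g (x ω)) := by
    simp_rw [hg]
    exact (Finset.stronglyMeasurable_fun_sum univ fun i _ =>
      (hGlip i).continuous.comp_stronglyMeasurable hxm).const_smul _
  have hwm : ∀ i, StronglyMeasurable[𝓖] (w i) := fun i =>
    (((hGlip i).continuous.comp_stronglyMeasurable hx'm).sub
      ((hGlip i).continuous.comp_stronglyMeasurable hxm)).const_smul _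
  have hw : ∀ i, MemLp (w i) 2 μ := fun i =>
    (((hGlip i).memLp_comp hx').sub ((hGlip i).memLp_comp hx)).const_smul _
  have hσ : MemLp (fun ω => g (x ω) - V ω) 2 μ := hgx.sub hV
  have hσ2 : Integrable (fun ω => ‖g (x ω) - V ω‖ ^ 2) μ := hσ.integrable_norm_pow two_ne_zero
  have hd2 : Integrable (fun ω => ‖x' ω - x ω‖ ^ 2) μ :=
    (hx'.sub hx).integrable_norm_pow two_ne_zero
  calc ∫ ω, ‖g (x' ω) - V' ω‖ ^ 2 ∂μ
      = ∫ ω, ‖(g (x ω) - V ω) - (∑ i ∈ S ω, w i ω - ∑ i, p i • w i ω)‖ ^ 2 ∂μ := by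
        simp_rw [herr]
    _ ≤ ∫ ω, (‖g (x ω) - V ω‖ ^ 2 + ∑ i, p i * v i * ‖w i ω‖ ^ 2) ∂μ :=
        hincl.integral_norm_sq_sub_sampling_le hsamp h𝓖 hS hlaw (hgm.sub hVm) hwm hσ hw
    _ ≤ ∫ ω, (‖g (x ω) - V ω‖ ^ 2
          + (∑ i, v i * L i ^ 2 / (p i * (n : ℝ) ^ 2)) * ‖x' ω - x ω‖ ^ 2) ∂μ := by
        refine integral_mono (hσ2.add (integrable_finsetSum _ fun i _ =>
          ((hw i).integrable_norm_pow two_ne_zero).const_mul _)) (hσ2.add (hd2.const_mul _))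
          fun ω => ?_
        simpa only [add_le_add_iff_left] using
          sum_mul_norm_sq_smul_sub_le hppos hv hG (x' ω) (x ω)
    _ = _ := by
        rw [integral_add hσ2 (hd2.const_mul _), integral_const_mul]

theorem integral_prox_step_le [IsFiniteMeasure μ] [CompleteSpace E] {g r : E → ℝ} {Lg η : ℝ}
    (hLg : 0 < Lg) (hg : Differentiable ℝ g)
    (hgL : ∀ a b, ‖gradient g a - gradient g b‖ ≤ Lg * ‖a - b‖) {x x' V : Ω → E}
    (hprox : ∀ ω y, r (x' ω) + ⟪V ω, x' ω - x ω⟫_ℝ + 1 / (2 * η) * ‖x' ω - x ω‖ ^ 2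
      ≤ r y + ⟪V ω, y - x ω⟫_ℝ + 1 / (2 * η) * ‖y - x ω‖ ^ 2)
    (hx : MemLp x 2 μ) (hx' : MemLp x' 2 μ) (hV : MemLp V 2 μ)
    (hF : Integrable (fun ω => g (x ω) + r (x ω)) μ)
    (hF' : Integrable (fun ω => g (x' ω) + r (x' ω)) μ) :
    1 / 2 * (1 / η - 2 * Lg) * ∫ ω, ‖x' ω - x ω‖ ^ 2 ∂μ
      ≤ ∫ ω, (g (x ω) + r (x ω)) ∂μ - ∫ ω, (g (x' ω) + r (x' ω)) ∂μ
        + 1 / (2 * Lg) * ∫ ω, ‖gradient g (x ω) - V ω‖ ^ 2 ∂μ := by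
  have hgradLp : MemLp (fun ω => gradient g (x ω)) 2 μ :=
    (LipschitzWith.of_dist_le' fun a b => by simpa only [dist_eq_norm] using hgL a b).memLp_comp hx
  have hσ2 : Integrable (fun ω => ‖gradient g (x ω) - V ω‖ ^ 2) μ :=
    (hgradLp.sub hV).integrable_norm_pow two_ne_zero
  have hd2 : Integrable (fun ω => ‖x' ω - x ω‖ ^ 2) μ :=
    (hx'.sub hx).integrable_norm_pow two_ne_zero
  have hA : Integrable (fun ω => g (x ω) + r (x ω)
      + 1 / (2 * Lg) * ‖gradient g (x ω) - V ω‖ ^ 2) μ := hF.add (hσ2.const_mul _)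
  have hB : Integrable (fun ω => (1 / (2 * η) - Lg) * ‖x' ω - x ω‖ ^ 2) μ := hd2.const_mul _
  have hAB : Integrable (fun ω => g (x ω) + r (x ω) + 1 / (2 * Lg) * ‖gradient g (x ω) - V ω‖ ^ 2
      - (1 / (2 * η) - Lg) * ‖x' ω - x ω‖ ^ 2) μ := hA.sub hB
  have hstep := integral_mono hF' hAB fun ω =>
    prox_step_le hLg (apply_le_of_lipschitz_gradient hg hgL (x ω) (x' ω)) (hprox ω)
  rw [integral_sub hA hB, integral_add hF (hσ2.const_mul _), integral_const_mul,
    integral_const_mul] at hstep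
  rw [show 1 / 2 * (1 / η - 2 * Lg) = 1 / (2 * η) - Lg by ring]
  linarith

end Stochastic

/-- In the application `D t = E‖x_{t+1} - x_t‖²`, `σ t = E‖∇f(x_t) - V_t‖²`, `Φ t = E F(x_t)`. -/
theorem mul_sum_le_of_descent_of_variance_recursion {m : ℕ} {D σ Φ : ℕ → ℝ} {c K Q : ℝ}
    (hD : ∀ t, 0 ≤ D t) (hD0 : D 0 = 0) (hσ0 : σ 0 = 0) (hQ : 0 ≤ Q) (hK : 0 ≤ K)
    (hσ : ∀ t < m, σ (t + 1) ≤ σ t + Q * D t)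
    (hdesc : ∀ t ∈ Icc 1 m, c * D t ≤ Φ t - Φ (t + 1) + K * σ t) :
    (c - m * Q * K) * ∑ t ∈ Icc 1 m, D t ≤ Φ 1 - Φ (m + 1) := by
  have hpartial : ∀ t ≤ m, σ t ≤ Q * ∑ s ∈ range t, D s := by
    intro t
    induction t with
    | zero => simp [hσ0]
    | succ t ih =>
      intro ht
      rw [sum_range_succ, mul_add]
      linarith [hσ t ht, ih (Nat.le_of_succ_le ht)]
  have htotal : ∑ s ∈ range (m + 1), D s = ∑ t ∈ Icc 1 m, D t := by
    rw [range_eq_Ico, sum_eq_sum_Ico_succ_bot m.succ_pos, hD0, zero_add, zero_add,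
      Nat.succ_eq_add_one, Ico_add_one_right_eq_Icc]
  have hσle : ∀ t ∈ Icc 1 m, σ t ≤ Q * ∑ t ∈ Icc 1 m, D t := fun t ht => by
    have htm := (mem_Icc.mp ht).2
    refine (hpartial t htm).trans (mul_le_mul_of_nonneg_left ?_ hQ)
    rw [← htotal]
    exact sum_le_sum_of_subset_of_nonneg (range_subset_range.mpr (by omega))
      fun s _ _ => hD s
  have htel : ∑ t ∈ Icc 1 m, (Φ t - Φ (t + 1)) = Φ 1 - Φ (m + 1) := by
    rw [← Ico_add_one_right_eq_Icc, ← neg_sub, ← sum_Ico_sub (f := Φ) (by omega),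
      ← sum_neg_distrib]
    simp_rw [neg_sub]
  have hsum := sum_le_sum hdesc
  rw [← mul_sum, sum_add_distrib, htel, ← mul_sum] at hsum
  have hσsum : ∑ t ∈ Icc 1 m, σ t ≤ m * (Q * ∑ t ∈ Icc 1 m, D t) := by
    simpa using sum_le_card_nsmul _ _ _ hσle
  nlinarith
theorem sarah_iterate_distance_bound_general {d n : ℕ}
    {Ω : Type*} [m0 : MeasurableSpace Ω] (μ : Measure Ω) [IsProbabilityMeasure μ]
    (f : Fin n → EuclideanSpace ℝ (Fin d) → ℝ) (L : Fin n → ℝ)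
    (hdiff : ∀ i, Differentiable ℝ (f i))
    (hlip : ∀ i, ∀ x₁ x₂ : EuclideanSpace ℝ (Fin d),
      ‖gradient (f i) x₁ - gradient (f i) x₂‖ ≤ L i * ‖x₁ - x₂‖)
    (favg : EuclideanSpace ℝ (Fin d) → ℝ)
    (hfavg : favg = fun x => (1 / (n : ℝ)) * ∑ i, f i x)
    (Lt : ℝ) (hLt : Lt = (1 / (n : ℝ)) * ∑ i, L i) (hLtpos : 0 < Lt)
    (r : EuclideanSpace ℝ (Fin d) → ℝ)
    (F : EuclideanSpace ℝ (Fin d) → ℝ) (hF : F = fun x => favg x + r x)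
    (q : Finset (Fin n) → ℝ) (hq0 : ∀ A, 0 ≤ q A) (hq1 : ∑ A : Finset (Fin n), q A = 1)
    (p : Fin n → ℝ) (hppos : ∀ i, 0 < p i)
    (hpq : ∀ i, p i = ∑ A ∈ Finset.univ.filter (fun A : Finset (Fin n) => i ∈ A), q A)
    (P : Fin n → Fin n → ℝ)
    (hPq : ∀ i j, P i j =
      ∑ A ∈ Finset.univ.filter (fun A : Finset (Fin n) => i ∈ A ∧ j ∈ A), q A)
    (v : Fin n → ℝ)
    (hsamp : ∀ u : Fin n → ℝ,
      ∑ i, ∑ j, (P i j - p i * p j) * u i * u j ≤ ∑ i, p i * v i * u i ^ 2)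
    (J m : ℕ)
    (x V : ℕ → ℕ → Ω → EuclideanSpace ℝ (Fin d))
    (S : ℕ → ℕ → Ω → Finset (Fin n))
    (hx10 : ∀ j ∈ Finset.Icc 1 J, ∀ ω, x j 1 ω = x j 0 ω)
    (hV0 : ∀ j ∈ Finset.Icc 1 J, ∀ ω, V j 0 ω = gradient favg (x j 0 ω))
    (𝓖 : ℕ → ℕ → MeasurableSpace Ω) (h𝓖 : ∀ j t, 𝓖 j t ≤ m0)
    (hmeas : ∀ j ∈ Finset.Icc 1 J, ∀ t ∈ Finset.Icc 1 m,
      StronglyMeasurable[𝓖 j t] (x j t) ∧ StronglyMeasurable[𝓖 j t] (x j (t - 1)) ∧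
        StronglyMeasurable[𝓖 j t] (V j (t - 1)))
    (hSmeas : ∀ j ∈ Finset.Icc 1 J, ∀ t ∈ Finset.Icc 1 m, ∀ A : Finset (Fin n),
      MeasurableSet {ω | S j t ω = A})
    (hSlaw : ∀ j ∈ Finset.Icc 1 J, ∀ t ∈ Finset.Icc 1 m, ∀ A : Finset (Fin n),
      μ[({ω | S j t ω = A}).indicator (fun _ => (1 : ℝ)) | 𝓖 j t] =ᵐ[μ] fun _ => q A)
    (hVrec : ∀ j ∈ Finset.Icc 1 J, ∀ t ∈ Finset.Icc 1 m, ∀ ω,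
      V j t ω = (∑ i ∈ S j t ω, (1 / ((n : ℝ) * p i)) •
          (gradient (f i) (x j t ω) - gradient (f i) (x j (t - 1) ω))) + V j (t - 1) ω)
    (hL2 : ∀ j ∈ Finset.Icc 1 J, ∀ t ∈ Finset.Icc 0 (m + 1),
      MemLp (x j t) 2 μ ∧ MemLp (V j t) 2 μ)
    (hFint : ∀ j ∈ Finset.Icc 1 J, ∀ t ∈ Finset.Icc 0 (m + 1),
      Integrable (fun ω => F (x j t ω)) μ)
    (Q : ℝ) (hQ : Q = ∑ i, v i * L i ^ 2 / (p i * (n : ℝ) ^ 2))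
    (η : ℝ)
    (hcond : 0 < (1 / 2) * (1 / η - 2 * Lt) - (m : ℝ) * Q / (2 * Lt))
    (hupdate : ∀ j ∈ Finset.Icc 1 J, ∀ t ∈ Finset.Icc 1 m, ∀ ω,
      ∀ y : EuclideanSpace ℝ (Fin d),
      r (x j (t + 1) ω) + (inner ℝ (V j t ω) (x j (t + 1) ω - x j t ω) : ℝ)
          + (1 / (2 * η)) * ‖x j (t + 1) ω - x j t ω‖ ^ 2
        ≤ r y + (inner ℝ (V j t ω) (y - x j t ω) : ℝ)
          + (1 / (2 * η)) * ‖y - x j t ω‖ ^ 2) :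
    ∀ j ∈ Finset.Icc 1 J,
      ∑ t ∈ Finset.Icc 1 m, ∫ ω, ‖x j (t + 1) ω - x j t ω‖ ^ 2 ∂μ
        ≤ (∫ ω, (F (x j 0 ω) - F (x j (m + 1) ω)) ∂μ)
            / ((1 / 2) * (1 / η - 2 * Lt) - (m : ℝ) * Q / (2 * Lt)) := by
  intro j hj
  subst hF hQ
  have hmem : ∀ t ≤ m + 1, MemLp (x j t) 2 μ ∧ MemLp (V j t) 2 μ := fun t ht =>
    hL2 j hj t (mem_Icc.mpr ⟨t.zero_le, ht⟩)
  have hFint' : ∀ t ≤ m + 1, Integrable (fun ω => favg (x j t ω) + r (x j t ω)) μ := fun t ht =>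
    hFint j hj t (mem_Icc.mpr ⟨t.zero_le, ht⟩)
  have hgrad : ∀ z, HasGradientAt favg ((1 / (n : ℝ)) • ∑ i, gradient (f i) z) z := fun z =>
    hfavg ▸ hasGradientAt_const_mul_sum (fun i => (hdiff i).differentiableAt) _
  have hLip : ∀ a b, ‖gradient favg a - gradient favg b‖ ≤ Lt * ‖a - b‖ := fun a b => by
    rw [(hgrad a).gradient, (hgrad b).gradient, hLt]
    exact norm_smul_sum_sub_smul_sum_le (by positivity) hlip a b
  have hincl : IsInclusionProbs q p P := ⟨hq1, hpq, hPq⟩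
  have hv := hincl.nonneg_of_covariance_le_diag hq0 hppos hsamp
  have key := mul_sum_le_of_descent_of_variance_recursion
    (D := fun t => ∫ ω, ‖x j (t + 1) ω - x j t ω‖ ^ 2 ∂μ)
    (Φ := fun t => ∫ ω, (favg (x j t ω) + r (x j t ω)) ∂μ)
    (σ := fun t => ∫ ω, ‖gradient favg (x j t ω) - V j t ω‖ ^ 2 ∂μ)
    (c := 1 / 2 * (1 / η - 2 * Lt)) (K := 1 / (2 * Lt))
    (fun t => integral_nonneg fun ω => by positivity) (by simp [hx10 j hj]) (by simp [hV0 j hj])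
    (sum_nonneg fun i _ => div_nonneg (mul_nonneg (hv i) (sq_nonneg _))
      (mul_nonneg (hppos i).le (sq_nonneg _)))
    (by positivity)
    (fun t ht => by
      have ht1 : t + 1 ∈ Icc 1 m := mem_Icc.mpr ⟨by omega, ht⟩
      obtain ⟨hxm, hx'm, hVm⟩ := hmeas j hj (t + 1) ht1
      simp only [Nat.add_sub_cancel] at hxm hx'm hVm
      exact hincl.integral_norm_sq_sarah_error_le hsamp hppos hv (h𝓖 j (t + 1))
        (hSmeas j hj (t + 1) ht1) (hSlaw j hj (t + 1) ht1) hlip (fun z => (hgrad z).gradient)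
        hx'm hxm hVm (hmem t (by omega)).1 (hmem (t + 1) (by omega)).1 (hmem t (by omega)).2
        (by simpa only [Nat.add_sub_cancel] using hVrec j hj (t + 1) ht1))
    (fun t ht => by
      have htm := (mem_Icc.mp ht).2
      exact integral_prox_step_le hLtpos (fun z => (hgrad z).differentiableAt) hLip
        (hupdate j hj t ht) (hmem t (by omega)).1 (hmem (t + 1) (by omega)).1
        (hmem t (by omega)).2 (hFint' t (by omega)) (hFint' (t + 1) (by omega)))
  simp only [hx10 j hj, mul_one_div] at key
  rw [integral_sub (hFint' 0 (by omega)) (hFint' (m + 1) le_rfl), le_div_iff₀ hcond, mul_comm]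
  exact key

/-- Lemma 5.4. Under the ProxSARAH-AS process within one epoch `j` —
with `f = (1/n)∑ᵢ fᵢ` `L̃`-smooth (`L̃ = (1/n)∑ᵢ Lᵢ > 0`), `F = f + r`, full-gradient
initialization `V₀⁽ʲ⁾ = ∇f(x₀⁽ʲ⁾)`, `x₁⁽ʲ⁾ = x₀⁽ʲ⁾`, the recursive estimator
`Vₜ⁽ʲ⁾ = ∑_{i∈Sₜ⁽ʲ⁾}(1/(n pᵢ))(∇fᵢ(xₜ⁽ʲ⁾) − ∇fᵢ(x_{t−1}⁽ʲ⁾)) + V_{t−1}⁽ʲ⁾` with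
subsets satisfying `P − ppᵀ ⪯ Diag(p∘v)` drawn independently of the past, proximal
updates, and `Q = ∑ᵢ vᵢLᵢ²/(pᵢn²)` — if `(1/2)(1/η − 2L̃) − mQ/(2L̃) > 0`, then
`∑_{t=1}^m E[‖x_{t+1}⁽ʲ⁾ − xₜ⁽ʲ⁾‖²]
  ≤ E[F(x₀⁽ʲ⁾) − F(x_{m+1}⁽ʲ⁾)] / ((1/2)(1/η − 2L̃) − mQ/(2L̃))`. -/
theorem sarah_iterate_distance_bound {d n : ℕ} (hn : 0 < n)
    {Ω : Type*} [m0 : MeasurableSpace Ω] (μ : Measure Ω) [IsProbabilityMeasure μ]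
    (f : Fin n → EuclideanSpace ℝ (Fin d) → ℝ) (L : Fin n → ℝ)
    (hdiff : ∀ i, Differentiable ℝ (f i))
    (hlip : ∀ i, ∀ x₁ x₂ : EuclideanSpace ℝ (Fin d),
      ‖gradient (f i) x₁ - gradient (f i) x₂‖ ≤ L i * ‖x₁ - x₂‖)
    (favg : EuclideanSpace ℝ (Fin d) → ℝ)
    (hfavg : favg = fun x => (1 / (n : ℝ)) * ∑ i, f i x)
    (Lt : ℝ) (hLt : Lt = (1 / (n : ℝ)) * ∑ i, L i) (hLtpos : 0 < Lt)
    (r : EuclideanSpace ℝ (Fin d) → ℝ)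
    (F : EuclideanSpace ℝ (Fin d) → ℝ) (hF : F = fun x => favg x + r x)
    (q : Finset (Fin n) → ℝ) (hq0 : ∀ A, 0 ≤ q A) (hq1 : ∑ A : Finset (Fin n), q A = 1)
    (p : Fin n → ℝ) (hppos : ∀ i, 0 < p i)
    (hpq : ∀ i, p i = ∑ A ∈ Finset.univ.filter (fun A : Finset (Fin n) => i ∈ A), q A)
    (P : Fin n → Fin n → ℝ)
    (hPq : ∀ i j, P i j =
      ∑ A ∈ Finset.univ.filter (fun A : Finset (Fin n) => i ∈ A ∧ j ∈ A), q A)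
    (v : Fin n → ℝ)
    (hsamp : ∀ u : Fin n → ℝ,
      ∑ i, ∑ j, (P i j - p i * p j) * u i * u j ≤ ∑ i, p i * v i * u i ^ 2)
    (J m : ℕ) (hJ : 0 < J) (hm : 0 < m)
    (x V : ℕ → ℕ → Ω → EuclideanSpace ℝ (Fin d))
    (S : ℕ → ℕ → Ω → Finset (Fin n))
    (hx10 : ∀ j ∈ Finset.Icc 1 J, ∀ ω, x j 1 ω = x j 0 ω)
    (hV0 : ∀ j ∈ Finset.Icc 1 J, ∀ ω, V j 0 ω = gradient favg (x j 0 ω))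
    (𝓖 : ℕ → ℕ → MeasurableSpace Ω) (h𝓖 : ∀ j t, 𝓖 j t ≤ m0)
    (hmeas : ∀ j ∈ Finset.Icc 1 J, ∀ t ∈ Finset.Icc 1 m,
      StronglyMeasurable[𝓖 j t] (x j t) ∧ StronglyMeasurable[𝓖 j t] (x j (t - 1)) ∧
        StronglyMeasurable[𝓖 j t] (V j (t - 1)))
    (hSmeas : ∀ j ∈ Finset.Icc 1 J, ∀ t ∈ Finset.Icc 1 m, ∀ A : Finset (Fin n),
      MeasurableSet {ω | S j t ω = A})
    (hSlaw : ∀ j ∈ Finset.Icc 1 J, ∀ t ∈ Finset.Icc 1 m, ∀ A : Finset (Fin n),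
      μ[({ω | S j t ω = A}).indicator (fun _ => (1 : ℝ)) | 𝓖 j t] =ᵐ[μ] fun _ => q A)
    (hVrec : ∀ j ∈ Finset.Icc 1 J, ∀ t ∈ Finset.Icc 1 m, ∀ ω,
      V j t ω = (∑ i ∈ S j t ω, (1 / ((n : ℝ) * p i)) •
          (gradient (f i) (x j t ω) - gradient (f i) (x j (t - 1) ω))) + V j (t - 1) ω)
    (hL2 : ∀ j ∈ Finset.Icc 1 J, ∀ t ∈ Finset.Icc 0 (m + 1),
      MemLp (x j t) 2 μ ∧ MemLp (V j t) 2 μ)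
    (hFint : ∀ j ∈ Finset.Icc 1 J, ∀ t ∈ Finset.Icc 0 (m + 1),
      Integrable (fun ω => F (x j t ω)) μ)
    (Q : ℝ) (hQ : Q = ∑ i, v i * L i ^ 2 / (p i * (n : ℝ) ^ 2))
    (η : ℝ) (hη : 0 < η)
    (hcond : 0 < (1 / 2) * (1 / η - 2 * Lt) - (m : ℝ) * Q / (2 * Lt))
    (hupdate : ∀ j ∈ Finset.Icc 1 J, ∀ t ∈ Finset.Icc 1 m, ∀ ω,
      ∀ y : EuclideanSpace ℝ (Fin d),
      r (x j (t + 1) ω) + (inner ℝ (V j t ω) (x j (t + 1) ω - x j t ω) : ℝ)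
          + (1 / (2 * η)) * ‖x j (t + 1) ω - x j t ω‖ ^ 2
        ≤ r y + (inner ℝ (V j t ω) (y - x j t ω) : ℝ)
          + (1 / (2 * η)) * ‖y - x j t ω‖ ^ 2) :
    ∀ j ∈ Finset.Icc 1 J,
      ∑ t ∈ Finset.Icc 1 m, ∫ ω, ‖x j (t + 1) ω - x j t ω‖ ^ 2 ∂μ
        ≤ (∫ ω, (F (x j 0 ω) - F (x j (m + 1) ω)) ∂μ)
            / ((1 / 2) * (1 / η - 2 * Lt) - (m : ℝ) * Q / (2 * Lt)) :=
  sarah_iterate_distance_bound_general (m0 := m0) μ f L hdiff hlip favg hfavg Lt hLt hLtpos r F hF q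
    hq0 hq1 p hppos hpq P hPq v hsamp J m x V S hx10 hV0 𝓖 h𝓖 hmeas hSmeas hSlaw hVrec hL2 hFint Q
    hQ η hcond hupdate
end

section
/- (Variance bound for the SPIDER estimator) Under the ProxSPIDER-AS process — where the epoch's initial estimator is V_0^{(j)} = ∑_{i∈S^{(j)}} (1/(n p'_i)) ∇f_i(x_0^{(j)}) with S^{(j)} a random subset with inclusion probabilities p'_i > 0 and pairwise probabilities P' satisfying P' − p'p'ᵀ ⪯ Diag(p'∘v'), and the inner recursion is V_t^{(j)} = ∑_{i∈S_t^{(j)}} (1/(n p_i))(∇f_i(x_t^{(j)}) − ∇f_i(x_{t−1}^{(j)})) + V_{t−1}^{(j)} with S_t^{(j)} drawn independently of the past with inclusion probabilities p_i > 0 and pairwise probabilities P satisfying P − ppᵀ ⪯ Diag(p∘v); each f_i is differentiable with L_i-Lipschitz gradient and ‖∇f_i(x)‖ ≤ G_i for all x — it holds for every 1 ≤ t ≤ m and every epoch j that E[‖V_t^{(j)} − ∇f(x_t^{(j)})‖²] ≤ Q·∑_{k=1}^t E[‖x_k^{(j)} − x_{k−1}^{(j)}‖²] + Q', where Q = ∑_{i=1}^n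 v_i L_i²/(p_i n²), Q' = ∑_{i=1}^n v'_i G_i²/(p'_i n²), and f = (1/n)∑_{i=1}^n f_i. -/
open MeasureTheory Filter Finset

/-! The error `eₜ = Vₜ − ∇f(xₜ)` of the SPIDER estimator satisfies
`eₜ = (∑_{i ∈ Sₜ} aᵢ − ∑ᵢ pᵢ aᵢ) + e_{t−1}` with `aᵢ = (∇fᵢ(xₜ) − ∇fᵢ(x_{t−1}))/(n pᵢ)`
(and `e₀ = ∑_{i ∈ S} aᵢ − ∑ᵢ p'ᵢ aᵢ` with `aᵢ = ∇fᵢ(x₀)/(n p'ᵢ)`). Conditionally on the past,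
the sampling error has mean zero, so squared norms add, and its second moment is
`∑ᵢⱼ (Pᵢⱼ − pᵢpⱼ)⟪aᵢ, aⱼ⟫ ≤ ∑ᵢ pᵢvᵢ‖aᵢ‖²` by the sampling condition applied coordinatewise.
The Lipschitz bound turns this into `Q‖xₜ − x_{t−1}‖²`, the gradient bound into `Q'` for
`e₀`, and summing over `t` gives the claim. -/

theorem le_add_sum_Icc_of_le_add {M : Type*} [AddCommMonoid M] [PartialOrder M]
    [IsOrderedAddMonoid M] {e b : ℕ → M} {m : ℕ}
    (h : ∀ t ∈ Icc 1 m, e t ≤ e (t - 1) + b t) : ∀ t ≤ m, e t ≤ e 0 + ∑ k ∈ Icc 1 t, b k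
  | 0, _ => by simp
  | t + 1, ht => by
    rw [Finset.sum_Icc_succ_top (by omega), ← add_assoc]
    have hstep := h (t + 1) (mem_Icc.2 ⟨by omega, ht⟩)
    rw [Nat.add_sub_cancel] at hstep
    exact hstep.trans (add_le_add_left (le_add_sum_Icc_of_le_add h t (by omega)) _)

theorem gradient_const_mul_sum {F ι : Type*} [NormedAddCommGroup F] [InnerProductSpace ℝ F]
    [CompleteSpace F] [Fintype ι] {f : ι → F → ℝ} (hf : ∀ i, Differentiable ℝ (f i)) (c : ℝ)
    (y : F) : gradient (fun x => c * ∑ i, f i x) y = c • ∑ i, gradient (f i) y := by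
  refine HasGradientAt.gradient ?_
  rw [hasGradientAt_iff_hasFDerivAt, map_smul, map_sum]
  simp_rw [toDual_gradient]
  exact (HasFDerivAt.fun_sum fun i _ => (hf i y).hasFDerivAt).const_mul c

section Sampling

variable {ι : Type*} [Fintype ι]

theorem sum_smul_one_div_mul_smul {M : Type*} [AddCommGroup M] [Module ℝ M] {p : ι → ℝ}
    (hp : ∀ i, p i ≠ 0) (c : ℝ) (w : ι → M) :
    ∑ i, p i • (1 / (c * p i)) • w i = (1 / c) • ∑ i, w i := by
  rw [Finset.smul_sum]
  refine Finset.sum_congr rfl fun i _ => ?_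
  rw [smul_smul, mul_one_div, div_mul_cancel_right₀ (hp i), one_div]

theorem sum_mul_norm_one_div_mul_smul_sq_le {E : Type*} [SeminormedAddCommGroup E]
    [NormedSpace ℝ E] {p v : ι → ℝ} (hp : ∀ i, 0 < p i) (hv : ∀ i, 0 ≤ v i) (c : ℝ)
    {w : ι → E} {K : ι → ℝ} (hw : ∀ i, ‖w i‖ ≤ K i) :
    ∑ i, p i * v i * ‖(1 / (c * p i)) • w i‖ ^ 2 ≤ ∑ i, v i * K i ^ 2 / (p i * c ^ 2) := by
  refine Finset.sum_le_sum fun i _ => ?_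
  have hpi := (hp i).ne'
  calc p i * v i * ‖(1 / (c * p i)) • w i‖ ^ 2 = v i * ‖w i‖ ^ 2 / (p i * c ^ 2) := by
        rw [norm_smul, mul_pow, Real.norm_eq_abs, sq_abs]
        field_simp
    _ ≤ v i * K i ^ 2 / (p i * c ^ 2) := by
        gcongr
        exacts [mul_nonneg (hp i).le (sq_nonneg c), hv i, hw i]

theorem sum_sum_mul_inner_le_of_quadratic_le {κ : Type*} [Fintype κ] (M : ι → ι → ℝ)
    (c : ι → ℝ) (h : ∀ u : ι → ℝ, ∑ i, ∑ j, M i j * u i * u j ≤ ∑ i, c i * u i ^ 2)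
    (a : ι → EuclideanSpace ℝ κ) :
    ∑ i, ∑ j, M i j * inner ℝ (a i) (a j) ≤ ∑ i, c i * ‖a i‖ ^ 2 := by
  calc ∑ i, ∑ j, M i j * inner ℝ (a i) (a j)
      = ∑ i, ∑ k, ∑ j, M i j * a i k * a j k := by
        simp_rw [PiLp.inner_apply, Finset.mul_sum, RCLike.inner_apply, conj_trivial]
        refine Finset.sum_congr rfl fun i _ => ?_
        rw [Finset.sum_comm]
        exact Finset.sum_congr rfl fun k _ => Finset.sum_congr rfl fun j _ => by ring
    _ = ∑ k, ∑ i, ∑ j, M i j * a i k * a j k := Finset.sum_comm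
    _ ≤ ∑ k, ∑ i, c i * a i k ^ 2 := Finset.sum_le_sum fun k _ => h _
    _ = ∑ i, c i * ‖a i‖ ^ 2 := by
        simp_rw [EuclideanSpace.real_norm_sq_eq, Finset.mul_sum]
        exact Finset.sum_comm

theorem sum_mul_norm_add_sq_of_sum_smul_eq_zero {α E : Type*} [NormedAddCommGroup E]
    [InnerProductSpace ℝ E] (s : Finset α) (q : α → ℝ) (hq : ∑ a ∈ s, q a = 1) (X : α → E)
    (hX : ∑ a ∈ s, q a • X a = 0) (D : E) :
    ∑ a ∈ s, q a * ‖X a + D‖ ^ 2 = ∑ a ∈ s, q a * ‖X a‖ ^ 2 + ‖D‖ ^ 2 := by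
  have hcross : ∑ a ∈ s, q a * inner ℝ (X a) D = 0 := by
    simp_rw [← real_inner_smul_left, ← sum_inner, hX, inner_zero_left]
  simp_rw [norm_add_sq_real, mul_add, Finset.sum_add_distrib, ← Finset.sum_mul, hq,
    mul_left_comm _ (2 : ℝ), ← Finset.mul_sum, hcross]
  ring

variable [DecidableEq ι]

/- For the law `q` of a random subset `S`, `inclusionProb q i = Prob(i ∈ S)` and
`pairInclusionProb q i j = Prob({i, j} ⊆ S)`; `SamplingCondition q v` is
`P − ppᵀ ⪯ Diag(p ∘ v)`. -/

def inclusionProb (q : Finset ι → ℝ) (i : ι) : ℝ :=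
  ∑ A ∈ univ.filter (fun A : Finset ι => i ∈ A), q A

def pairInclusionProb (q : Finset ι → ℝ) (i j : ι) : ℝ :=
  ∑ A ∈ univ.filter (fun A : Finset ι => i ∈ A ∧ j ∈ A), q A

def SamplingCondition (q : Finset ι → ℝ) (v : ι → ℝ) : Prop :=
  ∀ u : ι → ℝ, ∑ i, ∑ j, (pairInclusionProb q i j - inclusionProb q i * inclusionProb q j)
    * u i * u j ≤ ∑ i, inclusionProb q i * v i * u i ^ 2

theorem sum_smul_sum_mem_eq_sum_inclusionProb_smul {M : Type*} [AddCommGroup M] [Module ℝ M]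
    (q : Finset ι → ℝ) (a : ι → M) :
    ∑ A, q A • ∑ i ∈ A, a i = ∑ i, inclusionProb q i • a i := by
  simp_rw [inclusionProb, Finset.sum_smul, Finset.smul_sum]
  exact Finset.sum_comm' (by simp)

theorem sum_smul_sum_mem_sub_eq_zero {M : Type*} [AddCommGroup M] [Module ℝ M]
    {q : Finset ι → ℝ} (hq1 : ∑ A, q A = 1) (a : ι → M) :
    ∑ A, q A • (∑ i ∈ A, a i - ∑ i, inclusionProb q i • a i) = 0 := by
  simp_rw [smul_sub, Finset.sum_sub_distrib, ← Finset.sum_smul, hq1, one_smul,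
    sum_smul_sum_mem_eq_sum_inclusionProb_smul, sub_self]

theorem sum_mul_norm_sum_mem_sq {E : Type*} [NormedAddCommGroup E] [InnerProductSpace ℝ E]
    (q : Finset ι → ℝ) (a : ι → E) :
    ∑ A, q A * ‖∑ i ∈ A, a i‖ ^ 2 = ∑ i, ∑ j, pairInclusionProb q i j * inner ℝ (a i) (a j) := by
  simp_rw [← real_inner_self_eq_norm_sq, sum_inner, inner_sum, ← Finset.sum_product',
    pairInclusionProb, Finset.sum_mul, Finset.mul_sum]
  exact Finset.sum_comm' (by aesop)

theorem sum_mul_norm_sum_mem_sub_sq {E : Type*} [NormedAddCommGroup E] [InnerProductSpace ℝ E]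
    {q : Finset ι → ℝ} (hq1 : ∑ A, q A = 1) (a : ι → E) :
    ∑ A, q A * ‖∑ i ∈ A, a i - ∑ i, inclusionProb q i • a i‖ ^ 2
      = ∑ i, ∑ j, (pairInclusionProb q i j - inclusionProb q i * inclusionProb q j)
          * inner ℝ (a i) (a j) := by
  have hmean : ‖∑ i, inclusionProb q i • a i‖ ^ 2
      = ∑ i, ∑ j, inclusionProb q i * inclusionProb q j * inner ℝ (a i) (a j) := by
    simp_rw [← real_inner_self_eq_norm_sq, sum_inner, inner_sum, real_inner_smul_left,
      real_inner_smul_right, ← mul_assoc]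
  have := sum_mul_norm_add_sq_of_sum_smul_eq_zero univ q hq1 _
    (sum_smul_sum_mem_sub_eq_zero hq1 a) (∑ i, inclusionProb q i • a i)
  simp_rw [sub_add_cancel, sum_mul_norm_sum_mem_sq, sub_mul, Finset.sum_sub_distrib,
    ← hmean] at this ⊢
  linarith

theorem SamplingCondition.sum_mul_norm_sum_mem_sub_sq_le {κ : Type*} [Fintype κ]
    {q : Finset ι → ℝ} (hq1 : ∑ A, q A = 1) {v : ι → ℝ} (hv : SamplingCondition q v)
    (a : ι → EuclideanSpace ℝ κ) :
    ∑ A, q A * ‖∑ i ∈ A, a i - ∑ i, inclusionProb q i • a i‖ ^ 2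
      ≤ ∑ i, inclusionProb q i * v i * ‖a i‖ ^ 2 := by
  rw [sum_mul_norm_sum_mem_sub_sq hq1]
  exact sum_sum_mul_inner_le_of_quadratic_le _ _ hv a

theorem SamplingCondition.nonneg {q : Finset ι → ℝ} (hq0 : ∀ A, 0 ≤ q A) (hq1 : ∑ A, q A = 1)
    (hp : ∀ i, 0 < inclusionProb q i) {v : ι → ℝ} (hv : SamplingCondition q v) (i : ι) :
    0 ≤ v i := by
  have hp1 : inclusionProb q i ≤ 1 := hq1 ▸
    Finset.sum_le_sum_of_subset_of_nonneg (Finset.filter_subset _ _) fun A _ _ => hq0 A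
  have hpair : pairInclusionProb q i i = inclusionProb q i := by
    simp_rw [pairInclusionProb, inclusionProb, and_self]
  -- at the `i`-th unit vector the condition reads `pᵢ − pᵢ² ≤ pᵢ vᵢ`, so `vᵢ ≥ 1 − pᵢ ≥ 0`
  have := hv (Pi.single i 1)
  simp only [Pi.single_apply, mul_ite, mul_one, mul_zero, sum_ite_eq', mem_univ, ↓reduceIte,
    hpair, ite_pow, one_pow, ne_eq, OfNat.ofNat_ne_zero, not_false_eq_true, zero_pow,
    tsub_le_iff_right] at this
  nlinarith [hp i]

end Sampling

section Conditioning

variable {Ω : Type*} {m m0 : MeasurableSpace Ω} {μ : Measure Ω} [IsFiniteMeasure μ]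

theorem integral_indicator_eq_mul_of_condExp_indicator (hm : m ≤ m0) {T : Set Ω}
    (hT : MeasurableSet T) {c : ℝ}
    (hlaw : μ[T.indicator (fun _ => (1 : ℝ)) | m] =ᵐ[μ] fun _ => c)
    {H : Ω → ℝ} (hH : StronglyMeasurable[m] H) (hHi : Integrable H μ) :
    ∫ ω, T.indicator H ω ∂μ = c * ∫ ω, H ω ∂μ := by
  have hmul : T.indicator H = H * T.indicator (fun _ => (1 : ℝ)) := by
    ext ω; by_cases hω : ω ∈ T <;> simp [hω]
  have hint : Integrable (H * T.indicator fun _ => (1 : ℝ)) μ := hmul ▸ hHi.indicator hT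
  calc ∫ ω, T.indicator H ω ∂μ = ∫ ω, μ[H * T.indicator (fun _ => (1 : ℝ)) | m] ω ∂μ := by
        rw [integral_condExp hm, hmul]
    _ = ∫ ω, H ω * c ∂μ := by
        refine integral_congr_ae ?_
        filter_upwards [condExp_mul_of_stronglyMeasurable_left hH hint
          ((integrable_const _).indicator hT), hlaw] with ω hω hc
        rw [hω, Pi.mul_apply, hc]
    _ = c * ∫ ω, H ω ∂μ := by rw [integral_mul_const, mul_comm]

theorem integral_comp_eq_integral_sum_of_condExp_indicator {α : Type*} [Fintype α]
    (hm : m ≤ m0) {S : Ω → α} (hS : ∀ a, MeasurableSet {ω | S ω = a}) {q : α → ℝ}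
    (hlaw : ∀ a, μ[{ω | S ω = a}.indicator (fun _ => (1 : ℝ)) | m] =ᵐ[μ] fun _ => q a)
    {F : α → Ω → ℝ} (hF : ∀ a, StronglyMeasurable[m] (F a)) (hFi : ∀ a, Integrable (F a) μ) :
    ∫ ω, F (S ω) ω ∂μ = ∫ ω, ∑ a, q a * F a ω ∂μ := by
  have hsplit : ∀ ω, F (S ω) ω = ∑ a, {ω | S ω = a}.indicator (F a) ω := fun ω => by
    rw [Finset.sum_eq_single_of_mem (S ω) (mem_univ _)
      fun a _ ha => Set.indicator_of_notMem (s := {ω | S ω = a}) (Ne.symm ha) (F a)]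
    exact (Set.indicator_of_mem (s := {ω | S ω = S ω}) rfl (F (S ω))).symm
  simp_rw [hsplit]
  rw [integral_finsetSum _ fun a _ => (hFi a).indicator (hS a),
    integral_finsetSum _ fun a _ => (hFi a).const_mul (q a)]
  simp_rw [integral_const_mul]
  exact Finset.sum_congr rfl fun a _ =>
    integral_indicator_eq_mul_of_condExp_indicator hm (hS a) (hlaw a) (hF a) (hFi a)

end Conditioning

section Estimator

variable {ι κ Ω : Type*} [Fintype ι] [DecidableEq ι] [Fintype κ]
  {m m0 : MeasurableSpace Ω} {μ : Measure Ω} {q : Finset ι → ℝ} {v : ι → ℝ}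
  {S : Ω → Finset ι}

theorem integral_norm_sampling_error_add_sq_le [IsFiniteMeasure μ] (hm : m ≤ m0)
    (hq1 : ∑ A, q A = 1) (hv : SamplingCondition q v)
    (hS : ∀ A, MeasurableSet {ω | S ω = A})
    (hlaw : ∀ A, μ[{ω | S ω = A}.indicator (fun _ => (1 : ℝ)) | m] =ᵐ[μ] fun _ => q A)
    {a : ι → Ω → EuclideanSpace ℝ κ} (ha : ∀ i, StronglyMeasurable[m] (a i))
    (haL2 : ∀ i, MemLp (a i) 2 μ)
    {D : Ω → EuclideanSpace ℝ κ} (hD : StronglyMeasurable[m] D) (hDL2 : MemLp D 2 μ)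
    {B : Ω → ℝ} (hBi : Integrable B μ)
    (hB : ∀ ω, ∑ i, inclusionProb q i * v i * ‖a i ω‖ ^ 2 ≤ B ω) :
    ∫ ω, ‖∑ i ∈ S ω, a i ω - ∑ i, inclusionProb q i • a i ω + D ω‖ ^ 2 ∂μ
      ≤ ∫ ω, B ω ∂μ + ∫ ω, ‖D ω‖ ^ 2 ∂μ := by
  let F : Finset ι → Ω → ℝ := fun A ω =>
    ‖∑ i ∈ A, a i ω - ∑ i, inclusionProb q i • a i ω + D ω‖ ^ 2
  have hF : ∀ A, StronglyMeasurable[m] (F A) := fun A =>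
    (((Finset.stronglyMeasurable_fun_sum A fun i _ => ha i).sub
      (Finset.stronglyMeasurable_fun_sum _ fun i _ =>
        (ha i).const_smul (inclusionProb q i))).add hD).norm.pow 2
  have hFi : ∀ A, Integrable (F A) μ := fun A =>
    (((memLp_finsetSum A fun i _ => haL2 i).sub
      (memLp_finsetSum _ fun i _ =>
        (haL2 i).const_smul (inclusionProb q i))).add hDL2).norm.integrable_sq
  have hpoint : ∀ ω, ∑ A, q A * F A ω ≤ B ω + ‖D ω‖ ^ 2 := fun ω => by
    simp only [F]
    rw [sum_mul_norm_add_sq_of_sum_smul_eq_zero univ q hq1 _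
      (sum_smul_sum_mem_sub_eq_zero hq1 (a · ω)) (D ω)]
    linarith [hv.sum_mul_norm_sum_mem_sub_sq_le hq1 (a · ω), hB ω]
  calc ∫ ω, F (S ω) ω ∂μ = ∫ ω, ∑ A, q A * F A ω ∂μ :=
        integral_comp_eq_integral_sum_of_condExp_indicator hm hS hlaw hF hFi
    _ ≤ ∫ ω, (B ω + ‖D ω‖ ^ 2) ∂μ :=
        integral_mono (integrable_finsetSum _ fun A _ => (hFi A).const_mul (q A))
          (hBi.add hDL2.norm.integrable_sq) hpoint
    _ = ∫ ω, B ω ∂μ + ∫ ω, ‖D ω‖ ^ 2 ∂μ := integral_add hBi hDL2.norm.integrable_sq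

theorem integral_norm_initial_estimator_sub_sq_le [IsProbabilityMeasure μ] (hm : m ≤ m0)
    (hq1 : ∑ A, q A = 1) (hp : ∀ i, 0 < inclusionProb q i) (hv0 : ∀ i, 0 ≤ v i)
    (hv : SamplingCondition q v) (hS : ∀ A, MeasurableSet {ω | S ω = A})
    (hlaw : ∀ A, μ[{ω | S ω = A}.indicator (fun _ => (1 : ℝ)) | m] =ᵐ[μ] fun _ => q A)
    {g : ι → EuclideanSpace ℝ κ → EuclideanSpace ℝ κ} (hg : ∀ i, Continuous (g i))
    {G : ι → ℝ} (hG : ∀ i y, ‖g i y‖ ≤ G i) (c : ℝ)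
    {x V : Ω → EuclideanSpace ℝ κ} (hx : StronglyMeasurable[m] x)
    (hV : ∀ ω, V ω = ∑ i ∈ S ω, (1 / (c * inclusionProb q i)) • g i (x ω)) :
    ∫ ω, ‖V ω - (1 / c) • ∑ i, g i (x ω)‖ ^ 2 ∂μ
      ≤ ∑ i, v i * G i ^ 2 / (inclusionProb q i * c ^ 2) := by
  let a : ι → Ω → EuclideanSpace ℝ κ := fun i ω => (1 / (c * inclusionProb q i)) • g i (x ω)
  have hgx : ∀ i, StronglyMeasurable[m] fun ω => g i (x ω) :=
    fun i => (hg i).comp_stronglyMeasurable hx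
  have herr : ∀ ω, V ω - (1 / c) • ∑ i, g i (x ω)
      = ∑ i ∈ S ω, a i ω - ∑ i, inclusionProb q i • a i ω + 0 := fun ω => by
    rw [hV, sum_smul_one_div_mul_smul (fun i => (hp i).ne'), add_zero]
  simp_rw [herr]
  refine (integral_norm_sampling_error_add_sq_le hm hq1 hv hS hlaw
    (fun i => (hgx i).const_smul _)
    (fun i => (MemLp.of_bound ((hgx i).mono hm).aestronglyMeasurable (G i)
      (ae_of_all _ fun ω => hG i (x ω))).const_smul _)
    stronglyMeasurable_const (memLp_const 0) (integrable_const _)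
    fun ω => sum_mul_norm_one_div_mul_smul_sq_le hp hv0 c fun i => hG i (x ω)).trans_eq ?_
  simp

theorem integral_norm_recursive_estimator_sub_sq_le [IsFiniteMeasure μ] (hm : m ≤ m0)
    (hq1 : ∑ A, q A = 1) (hp : ∀ i, 0 < inclusionProb q i) (hv0 : ∀ i, 0 ≤ v i)
    (hv : SamplingCondition q v) (hS : ∀ A, MeasurableSet {ω | S ω = A})
    (hlaw : ∀ A, μ[{ω | S ω = A}.indicator (fun _ => (1 : ℝ)) | m] =ᵐ[μ] fun _ => q A)
    {g : ι → EuclideanSpace ℝ κ → EuclideanSpace ℝ κ} (hg : ∀ i, Continuous (g i))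
    {G : ι → ℝ} (hG : ∀ i y, ‖g i y‖ ≤ G i)
    {L : ι → ℝ} (hL : ∀ i y z, ‖g i y - g i z‖ ≤ L i * ‖y - z‖) (c : ℝ)
    {x x' V V' : Ω → EuclideanSpace ℝ κ} (hx : StronglyMeasurable[m] x)
    (hx' : StronglyMeasurable[m] x') (hV' : StronglyMeasurable[m] V')
    (hxL2 : MemLp x 2 μ) (hx'L2 : MemLp x' 2 μ) (hV'L2 : MemLp V' 2 μ)
    (hV : ∀ ω, V ω
      = ∑ i ∈ S ω, (1 / (c * inclusionProb q i)) • (g i (x ω) - g i (x' ω)) + V' ω) :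
    ∫ ω, ‖V ω - (1 / c) • ∑ i, g i (x ω)‖ ^ 2 ∂μ
      ≤ ∫ ω, ‖V' ω - (1 / c) • ∑ i, g i (x' ω)‖ ^ 2 ∂μ
        + (∑ i, v i * L i ^ 2 / (inclusionProb q i * c ^ 2)) * ∫ ω, ‖x ω - x' ω‖ ^ 2 ∂μ := by
  set Q := ∑ i, v i * L i ^ 2 / (inclusionProb q i * c ^ 2)
  let a : ι → Ω → EuclideanSpace ℝ κ := fun i ω =>
    (1 / (c * inclusionProb q i)) • (g i (x ω) - g i (x' ω))
  have hgx : ∀ y : Ω → EuclideanSpace ℝ κ, StronglyMeasurable[m] y → ∀ i,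
      StronglyMeasurable[m] fun ω => g i (y ω) :=
    fun y hy i => (hg i).comp_stronglyMeasurable hy
  have hgxL2 : ∀ y : Ω → EuclideanSpace ℝ κ, StronglyMeasurable[m] y → ∀ i,
      MemLp (fun ω => g i (y ω)) 2 μ := fun y hy i =>
    MemLp.of_bound ((hgx y hy i).mono hm).aestronglyMeasurable (G i)
      (ae_of_all _ fun ω => hG i (y ω))
  have herr : ∀ ω, V ω - (1 / c) • ∑ i, g i (x ω) = ∑ i ∈ S ω, a i ω
      - ∑ i, inclusionProb q i • a i ω + (V' ω - (1 / c) • ∑ i, g i (x' ω)) := fun ω => by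
    rw [hV, sum_smul_one_div_mul_smul (fun i => (hp i).ne'), Finset.sum_sub_distrib, smul_sub]
    abel
  have hbound := integral_norm_sampling_error_add_sq_le (a := a)
    (D := fun ω => V' ω - (1 / c) • ∑ i, g i (x' ω))
    (B := fun ω => Q * ‖x ω - x' ω‖ ^ 2) hm hq1 hv hS hlaw
    (fun i => ((hgx x hx i).sub (hgx x' hx' i)).const_smul (1 / (c * inclusionProb q i)))
    (fun i => ((hgxL2 x hx i).sub (hgxL2 x' hx' i)).const_smul (1 / (c * inclusionProb q i)))
    (hV'.sub ((Finset.stronglyMeasurable_fun_sum univ fun i _ => hgx x' hx' i).const_smul (1 / c)))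
    (hV'L2.sub ((memLp_finsetSum univ fun i _ => hgxL2 x' hx' i).const_smul (1 / c)))
    ((hxL2.sub hx'L2).norm.integrable_sq.const_mul Q)
    fun ω => (sum_mul_norm_one_div_mul_smul_sq_le hp hv0 c fun i => hL i (x ω) (x' ω)).trans_eq
      (by rw [Finset.sum_mul]; exact Finset.sum_congr rfl fun i _ => by ring)
  simp_rw [herr]
  rw [integral_const_mul] at hbound
  linarith

end Estimator

theorem spider_estimator_variance_bound_general {d n : ℕ}
    {Ω : Type*} [m0 : MeasurableSpace Ω] (μ : Measure Ω) [IsProbabilityMeasure μ]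
    (f : Fin n → EuclideanSpace ℝ (Fin d) → ℝ) (L : Fin n → ℝ)
    (hdiff : ∀ i, Differentiable ℝ (f i))
    (hlip : ∀ i, ∀ x₁ x₂ : EuclideanSpace ℝ (Fin d),
      ‖gradient (f i) x₁ - gradient (f i) x₂‖ ≤ L i * ‖x₁ - x₂‖)
    (G : Fin n → ℝ)
    (hbound : ∀ i, ∀ x : EuclideanSpace ℝ (Fin d), ‖gradient (f i) x‖ ≤ G i)
    (favg : EuclideanSpace ℝ (Fin d) → ℝ)
    (hfavg : favg = fun x => (1 / (n : ℝ)) * ∑ i, f i x)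
    -- inner-loop sampling scheme
    (q : Finset (Fin n) → ℝ) (hq0 : ∀ A, 0 ≤ q A) (hq1 : ∑ A : Finset (Fin n), q A = 1)
    (p : Fin n → ℝ) (hppos : ∀ i, 0 < p i)
    (hpq : ∀ i, p i = ∑ A ∈ Finset.univ.filter (fun A : Finset (Fin n) => i ∈ A), q A)
    (P : Fin n → Fin n → ℝ)
    (hPq : ∀ i j, P i j =
      ∑ A ∈ Finset.univ.filter (fun A : Finset (Fin n) => i ∈ A ∧ j ∈ A), q A)
    (v : Fin n → ℝ)
    (hsamp : ∀ u : Fin n → ℝ,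
      ∑ i, ∑ j, (P i j - p i * p j) * u i * u j ≤ ∑ i, p i * v i * u i ^ 2)
    -- outer-loop sampling scheme
    (q' : Finset (Fin n) → ℝ) (hq'0 : ∀ A, 0 ≤ q' A)
    (hq'1 : ∑ A : Finset (Fin n), q' A = 1)
    (p' : Fin n → ℝ) (hp'pos : ∀ i, 0 < p' i)
    (hp'q : ∀ i, p' i = ∑ A ∈ Finset.univ.filter (fun A : Finset (Fin n) => i ∈ A), q' A)
    (P' : Fin n → Fin n → ℝ)
    (hP'q : ∀ i j, P' i j =
      ∑ A ∈ Finset.univ.filter (fun A : Finset (Fin n) => i ∈ A ∧ j ∈ A), q' A)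
    (v' : Fin n → ℝ)
    (hsamp' : ∀ u : Fin n → ℝ,
      ∑ i, ∑ j, (P' i j - p' i * p' j) * u i * u j ≤ ∑ i, p' i * v' i * u i ^ 2)
    -- the process
    (J m : ℕ)
    (x V : ℕ → ℕ → Ω → EuclideanSpace ℝ (Fin d))
    (S : ℕ → ℕ → Ω → Finset (Fin n)) (S' : ℕ → Ω → Finset (Fin n))
    (hV0 : ∀ j ∈ Finset.Icc 1 J, ∀ ω,
      V j 0 ω = ∑ i ∈ S' j ω, (1 / ((n : ℝ) * p' i)) • gradient (f i) (x j 0 ω))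
    (𝓖 : ℕ → ℕ → MeasurableSpace Ω) (h𝓖 : ∀ j t, 𝓖 j t ≤ m0)
    (𝓖' : ℕ → MeasurableSpace Ω) (h𝓖' : ∀ j, 𝓖' j ≤ m0)
    (hmeas : ∀ j ∈ Finset.Icc 1 J, ∀ t ∈ Finset.Icc 1 m,
      StronglyMeasurable[𝓖 j t] (x j t) ∧ StronglyMeasurable[𝓖 j t] (x j (t - 1)) ∧
        StronglyMeasurable[𝓖 j t] (V j (t - 1)))
    (hmeas' : ∀ j ∈ Finset.Icc 1 J, StronglyMeasurable[𝓖' j] (x j 0))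
    (hSmeas : ∀ j ∈ Finset.Icc 1 J, ∀ t ∈ Finset.Icc 1 m, ∀ A : Finset (Fin n),
      MeasurableSet {ω | S j t ω = A})
    (hS'meas : ∀ j ∈ Finset.Icc 1 J, ∀ A : Finset (Fin n),
      MeasurableSet {ω | S' j ω = A})
    (hSlaw : ∀ j ∈ Finset.Icc 1 J, ∀ t ∈ Finset.Icc 1 m, ∀ A : Finset (Fin n),
      μ[({ω | S j t ω = A}).indicator (fun _ => (1 : ℝ)) | 𝓖 j t] =ᵐ[μ] fun _ => q A)
    (hS'law : ∀ j ∈ Finset.Icc 1 J, ∀ A : Finset (Fin n),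
      μ[({ω | S' j ω = A}).indicator (fun _ => (1 : ℝ)) | 𝓖' j] =ᵐ[μ] fun _ => q' A)
    (hVrec : ∀ j ∈ Finset.Icc 1 J, ∀ t ∈ Finset.Icc 1 m, ∀ ω,
      V j t ω = (∑ i ∈ S j t ω, (1 / ((n : ℝ) * p i)) •
          (gradient (f i) (x j t ω) - gradient (f i) (x j (t - 1) ω))) + V j (t - 1) ω)
    (hL2 : ∀ j ∈ Finset.Icc 1 J, ∀ t ∈ Finset.Icc 0 m,
      MemLp (x j t) 2 μ ∧ MemLp (V j t) 2 μ)
    (Q Q' : ℝ) (hQ : Q = ∑ i, v i * L i ^ 2 / (p i * (n : ℝ) ^ 2))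
    (hQ' : Q' = ∑ i, v' i * G i ^ 2 / (p' i * (n : ℝ) ^ 2)) :
    ∀ j ∈ Finset.Icc 1 J, ∀ t ∈ Finset.Icc 1 m,
      ∫ ω, ‖V j t ω - gradient favg (x j t ω)‖ ^ 2 ∂μ
        ≤ Q * (∑ k ∈ Finset.Icc 1 t, ∫ ω, ‖x j k ω - x j (k - 1) ω‖ ^ 2 ∂μ) + Q' := by
  obtain rfl : p = inclusionProb q := funext hpq
  obtain rfl : P = pairInclusionProb q := funext₂ hPq
  obtain rfl : p' = inclusionProb q' := funext hp'q
  obtain rfl : P' = pairInclusionProb q' := funext₂ hP'q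
  have hgrad : ∀ y, gradient favg y = (1 / (n : ℝ)) • ∑ i, gradient (f i) y :=
    hfavg ▸ gradient_const_mul_sum hdiff _
  have hcont : ∀ i, Continuous (gradient (f i)) := fun i =>
    (LipschitzWith.of_dist_le' fun a b => by simpa only [dist_eq_norm] using hlip i a b).continuous
  have hv := SamplingCondition.nonneg hq0 hq1 hppos hsamp
  have hv' := SamplingCondition.nonneg hq'0 hq'1 hp'pos hsamp'
  intro j hj t ht
  simp_rw [hgrad]
  have hbase := hQ' ▸ integral_norm_initial_estimator_sub_sq_le (μ := μ) (h𝓖' j) hq'1 hp'pos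
    hv' hsamp' (hS'meas j hj) (hS'law j hj) hcont hbound _ (hmeas' j hj) (hV0 j hj)
  have hstep : ∀ k ∈ Icc 1 m,
      ∫ ω, ‖V j k ω - (1 / (n : ℝ)) • ∑ i, gradient (f i) (x j k ω)‖ ^ 2 ∂μ
        ≤ ∫ ω, ‖V j (k - 1) ω - (1 / (n : ℝ)) • ∑ i, gradient (f i) (x j (k - 1) ω)‖ ^ 2 ∂μ
          + Q * ∫ ω, ‖x j k ω - x j (k - 1) ω‖ ^ 2 ∂μ := fun k hk => by
    obtain ⟨hxk, hxk', hVk'⟩ := hmeas j hj k hk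
    have hkm := (mem_Icc.1 hk).2
    have hk0 : k ∈ Icc 0 m := mem_Icc.2 ⟨k.zero_le, hkm⟩
    have hk1 : k - 1 ∈ Icc 0 m := mem_Icc.2 ⟨(k - 1).zero_le, by omega⟩
    exact hQ ▸ integral_norm_recursive_estimator_sub_sq_le (h𝓖 j k) hq1 hppos hv hsamp
      (hSmeas j hj k hk) (hSlaw j hj k hk) hcont hbound hlip _ hxk hxk' hVk'
      (hL2 j hj k hk0).1 (hL2 j hj (k - 1) hk1).1 (hL2 j hj (k - 1) hk1).2 (hVrec j hj k hk)
  have := le_add_sum_Icc_of_le_add hstep t (mem_Icc.1 ht).2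
  rw [← Finset.mul_sum] at this
  linarith

/-- variance bound for the SPIDER estimator. Under the ProxSPIDER-AS
process — with the epoch's initial estimator `V₀⁽ʲ⁾ = ∑_{i∈S⁽ʲ⁾}(1/(n p'ᵢ))∇fᵢ(x₀⁽ʲ⁾)`,
where `S⁽ʲ⁾` has law `q'` with inclusion probabilities `p'ᵢ > 0` and pairwise
probabilities `P'` satisfying `P' − p'p'ᵀ ⪯ Diag(p'∘v')`, and inner recursion
`Vₜ⁽ʲ⁾ = ∑_{i∈Sₜ⁽ʲ⁾}(1/(n pᵢ))(∇fᵢ(xₜ⁽ʲ⁾) − ∇fᵢ(x_{t−1}⁽ʲ⁾)) + V_{t−1}⁽ʲ⁾`, where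
`Sₜ⁽ʲ⁾` is drawn independently of the past with law `q` satisfying
`P − ppᵀ ⪯ Diag(p∘v)`; each `fᵢ` differentiable with `Lᵢ`-Lipschitz gradient and
`‖∇fᵢ(x)‖ ≤ Gᵢ` — for every `1 ≤ t ≤ m` and every epoch `j`,
`E[‖Vₜ⁽ʲ⁾ − ∇f(xₜ⁽ʲ⁾)‖²] ≤ Q ∑_{k=1}^t E[‖xₖ⁽ʲ⁾ − x_{k−1}⁽ʲ⁾‖²] + Q'`, where
`Q = ∑ᵢ vᵢLᵢ²/(pᵢn²)` and `Q' = ∑ᵢ v'ᵢGᵢ²/(p'ᵢn²)`. -/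
theorem spider_estimator_variance_bound {d n : ℕ} (hn : 0 < n)
    {Ω : Type*} [m0 : MeasurableSpace Ω] (μ : Measure Ω) [IsProbabilityMeasure μ]
    (f : Fin n → EuclideanSpace ℝ (Fin d) → ℝ) (L : Fin n → ℝ)
    (hdiff : ∀ i, Differentiable ℝ (f i))
    (hlip : ∀ i, ∀ x₁ x₂ : EuclideanSpace ℝ (Fin d),
      ‖gradient (f i) x₁ - gradient (f i) x₂‖ ≤ L i * ‖x₁ - x₂‖)
    (G : Fin n → ℝ)
    (hbound : ∀ i, ∀ x : EuclideanSpace ℝ (Fin d), ‖gradient (f i) x‖ ≤ G i)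
    (favg : EuclideanSpace ℝ (Fin d) → ℝ)
    (hfavg : favg = fun x => (1 / (n : ℝ)) * ∑ i, f i x)
    -- inner-loop sampling scheme
    (q : Finset (Fin n) → ℝ) (hq0 : ∀ A, 0 ≤ q A) (hq1 : ∑ A : Finset (Fin n), q A = 1)
    (p : Fin n → ℝ) (hppos : ∀ i, 0 < p i)
    (hpq : ∀ i, p i = ∑ A ∈ Finset.univ.filter (fun A : Finset (Fin n) => i ∈ A), q A)
    (P : Fin n → Fin n → ℝ)
    (hPq : ∀ i j, P i j =
      ∑ A ∈ Finset.univ.filter (fun A : Finset (Fin n) => i ∈ A ∧ j ∈ A), q A)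
    (v : Fin n → ℝ)
    (hsamp : ∀ u : Fin n → ℝ,
      ∑ i, ∑ j, (P i j - p i * p j) * u i * u j ≤ ∑ i, p i * v i * u i ^ 2)
    -- outer-loop sampling scheme
    (q' : Finset (Fin n) → ℝ) (hq'0 : ∀ A, 0 ≤ q' A)
    (hq'1 : ∑ A : Finset (Fin n), q' A = 1)
    (p' : Fin n → ℝ) (hp'pos : ∀ i, 0 < p' i)
    (hp'q : ∀ i, p' i = ∑ A ∈ Finset.univ.filter (fun A : Finset (Fin n) => i ∈ A), q' A)
    (P' : Fin n → Fin n → ℝ)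
    (hP'q : ∀ i j, P' i j =
      ∑ A ∈ Finset.univ.filter (fun A : Finset (Fin n) => i ∈ A ∧ j ∈ A), q' A)
    (v' : Fin n → ℝ)
    (hsamp' : ∀ u : Fin n → ℝ,
      ∑ i, ∑ j, (P' i j - p' i * p' j) * u i * u j ≤ ∑ i, p' i * v' i * u i ^ 2)
    -- the process
    (J m : ℕ) (hJ : 0 < J) (hm : 0 < m)
    (x V : ℕ → ℕ → Ω → EuclideanSpace ℝ (Fin d))
    (S : ℕ → ℕ → Ω → Finset (Fin n)) (S' : ℕ → Ω → Finset (Fin n))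
    (hx10 : ∀ j ∈ Finset.Icc 1 J, ∀ ω, x j 1 ω = x j 0 ω)
    (hV0 : ∀ j ∈ Finset.Icc 1 J, ∀ ω,
      V j 0 ω = ∑ i ∈ S' j ω, (1 / ((n : ℝ) * p' i)) • gradient (f i) (x j 0 ω))
    (𝓖 : ℕ → ℕ → MeasurableSpace Ω) (h𝓖 : ∀ j t, 𝓖 j t ≤ m0)
    (𝓖' : ℕ → MeasurableSpace Ω) (h𝓖' : ∀ j, 𝓖' j ≤ m0)
    (hmeas : ∀ j ∈ Finset.Icc 1 J, ∀ t ∈ Finset.Icc 1 m,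
      StronglyMeasurable[𝓖 j t] (x j t) ∧ StronglyMeasurable[𝓖 j t] (x j (t - 1)) ∧
        StronglyMeasurable[𝓖 j t] (V j (t - 1)))
    (hmeas' : ∀ j ∈ Finset.Icc 1 J, StronglyMeasurable[𝓖' j] (x j 0))
    (hSmeas : ∀ j ∈ Finset.Icc 1 J, ∀ t ∈ Finset.Icc 1 m, ∀ A : Finset (Fin n),
      MeasurableSet {ω | S j t ω = A})
    (hS'meas : ∀ j ∈ Finset.Icc 1 J, ∀ A : Finset (Fin n),
      MeasurableSet {ω | S' j ω = A})
    (hSlaw : ∀ j ∈ Finset.Icc 1 J, ∀ t ∈ Finset.Icc 1 m, ∀ A : Finset (Fin n),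
      μ[({ω | S j t ω = A}).indicator (fun _ => (1 : ℝ)) | 𝓖 j t] =ᵐ[μ] fun _ => q A)
    (hS'law : ∀ j ∈ Finset.Icc 1 J, ∀ A : Finset (Fin n),
      μ[({ω | S' j ω = A}).indicator (fun _ => (1 : ℝ)) | 𝓖' j] =ᵐ[μ] fun _ => q' A)
    (hVrec : ∀ j ∈ Finset.Icc 1 J, ∀ t ∈ Finset.Icc 1 m, ∀ ω,
      V j t ω = (∑ i ∈ S j t ω, (1 / ((n : ℝ) * p i)) •
          (gradient (f i) (x j t ω) - gradient (f i) (x j (t - 1) ω))) + V j (t - 1) ω)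
    (hL2 : ∀ j ∈ Finset.Icc 1 J, ∀ t ∈ Finset.Icc 0 m,
      MemLp (x j t) 2 μ ∧ MemLp (V j t) 2 μ)
    (Q Q' : ℝ) (hQ : Q = ∑ i, v i * L i ^ 2 / (p i * (n : ℝ) ^ 2))
    (hQ' : Q' = ∑ i, v' i * G i ^ 2 / (p' i * (n : ℝ) ^ 2)) :
    ∀ j ∈ Finset.Icc 1 J, ∀ t ∈ Finset.Icc 1 m,
      ∫ ω, ‖V j t ω - gradient favg (x j t ω)‖ ^ 2 ∂μ
        ≤ Q * (∑ k ∈ Finset.Icc 1 t, ∫ ω, ‖x j k ω - x j (k - 1) ω‖ ^ 2 ∂μ) + Q' :=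
  spider_estimator_variance_bound_general (m0 := m0) μ f L hdiff hlip G hbound favg hfavg q hq0 hq1
    p hppos hpq P hPq v hsamp q' hq'0 hq'1 p' hp'pos hp'q P' hP'q v' hsamp' J m x V S S' hV0 𝓖 h𝓖 𝓖'
    h𝓖' hmeas hmeas' hSmeas hS'meas hSlaw hS'law hVrec hL2 Q Q' hQ hQ'
end
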